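/- For all indices i, j, the partial derivative of the marginal-utility loss L with respect to s i j equals -(1/M) · (τr i j − 2·q i j·τc i j) · q i j · (1 − q i j); formally, the function t ↦ L(s with the (i,j) entry replaced by t) has derivative -(1/M)·(τr i j − 2·σ(s i j)·τc i j)·σ(s i j)·(1 − σ(s i j)) at the point s i j. -/

import Mathlib

/-!
Only the summand indexed by `(i, j)` depends on `t`, so the derivative is `-(1/M)` times that of
`σ t · τr - σ t² · τc`, which the chain rule with `σ' = σ (1 - σ)` gives.
-/

/-- The sigmoid function. -/
noncomputable def sigm (t : ℝ) : ℝ := 1 / (1 + Real.exp (-t))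

open Function

theorem sigm_eq_sigmoid : sigm = Real.sigmoid := by
  funext t
  rw [sigm, Real.sigmoid_def, one_div]

theorem hasDerivAt_sigm_mul_sub_sigm_sq_mul (a b x : ℝ) :
    HasDerivAt (fun t => sigm t * a - sigm t ^ 2 * b)
      ((a - 2 * sigm x * b) * (sigm x * (1 - sigm x))) x := by
  rw [sigm_eq_sigmoid]
  have hσ := Real.hasDerivAt_sigmoid x
  exact ((hσ.mul_const a).sub ((hσ.pow 2).mul_const b)).congr_deriv (by push_cast; ring)

theorem hasDerivAt_sum_update {ι E : Type*} [Fintype ι] [DecidableEq ι]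
    (g : ι → E → ℝ) (x : ι → E) (i : ι) {γ : ℝ → E} {g' t₀ : ℝ}
    (h : HasDerivAt (fun t => g i (γ t)) g' t₀) :
    HasDerivAt (fun t => ∑ k, g k (update x i (γ t) k)) g' t₀ := by
  have hsplit : (fun t => ∑ k, g k (update x i (γ t) k))
      = fun t => g i (γ t) + ∑ k ∈ Finset.univ.erase i, g k (x k) := by
    funext t
    rw [← Finset.add_sum_erase _ _ (Finset.mem_univ i), update_self]
    congr 1
    exact Finset.sum_congr rfl fun k hk => by rw [update_of_ne (Finset.ne_of_mem_erase hk)]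
  rw [hsplit]
  exact h.add_const _

theorem marginal_utility_partial_deriv_general
    (M K : ℕ)
    (s τr τc : Fin M → Fin K → ℝ)
    (L : (Fin M → Fin K → ℝ) → ℝ)
    (hL : L = fun u : Fin M → Fin K → ℝ => -(1 / (M : ℝ)) *
      ∑ i, ∑ j, (sigm (u i j) * τr i j - (sigm (u i j)) ^ 2 * τc i j))
    (i : Fin M) (j : Fin K) :
    HasDerivAt
      (fun t : ℝ => L (Function.update s i (Function.update (s i) j t)))
      (-(1 / (M : ℝ)) * (τr i j - 2 * sigm (s i j) * τc i j)
        * sigm (s i j) * (1 - sigm (s i j)))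
      (s i j) := by
  subst hL
  have hentry := hasDerivAt_sigm_mul_sub_sigm_sq_mul (τr i j) (τc i j) (s i j)
  have hrow := hasDerivAt_sum_update (fun j' y => sigm y * τr i j' - sigm y ^ 2 * τc i j')
    (s i) j (γ := id) hentry
  have hloss := hasDerivAt_sum_update
    (fun i' v => ∑ j', (sigm (v j') * τr i' j' - sigm (v j') ^ 2 * τc i' j')) s i hrow
  exact (hloss.const_mul _).congr_deriv (by ring)

/-- partial derivative of the marginal-utility loss with respect
to the coordinate `s i j`. -/
theorem marginal_utility_partial_deriv
    (M K : ℕ) (hM : 0 < M) (hK : 0 < K)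
    (s τr τc : Fin M → Fin K → ℝ)
    (L : (Fin M → Fin K → ℝ) → ℝ)
    (hL : L = fun u : Fin M → Fin K → ℝ => -(1 / (M : ℝ)) *
      ∑ i, ∑ j, (sigm (u i j) * τr i j - (sigm (u i j)) ^ 2 * τc i j))
    (i : Fin M) (j : Fin K) :
    HasDerivAt
      (fun t : ℝ => L (Function.update s i (Function.update (s i) j t)))
      (-(1 / (M : ℝ)) * (τr i j - 2 * sigm (s i j) * τc i j)
        * sigm (s i j) * (1 - sigm (s i j)))
      (s i j) :=
  marginal_utility_partial_deriv_general M K s τr τc L hL i j
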